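/- The following area identities hold: (a) |𝒯(k,1)| = |𝒯(k)| for all k ≥ 5; (b) |𝒯(k,1,2)| = |𝒯(k)| for all k ≥ 9; (c) |𝒯(2,1,k)| = |𝒯(k)| for all k ≥ 9; (d) |𝒯(2,1,k,1)| = |𝒯(k)| for all k ≥ 9; (e) |𝒯(2,1,k,1,2)| = |𝒯(k)| for all k ≥ 9; (f) |𝒯(1,k,1)| = |𝒯(k)| for all k ≥ 6. -/

import Mathlib

open MeasureTheory

/-- The BCZ transform T(x,y) = (y, ⌊(1+x)/y⌋·y − x). -/
noncomputable def bcz (p : ℝ × ℝ) : ℝ × ℝ :=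
  (p.2, (⌊(1 + p.1) / p.2⌋ : ℝ) * p.2 - p.1)

/-- The Farey triangle 𝒯 = {(x,y) : 0 < x ≤ 1, 0 < y ≤ 1, x + y > 1}. -/
def fareyTriangle : Set (ℝ × ℝ) :=
  {p | 0 < p.1 ∧ p.1 ≤ 1 ∧ 0 < p.2 ∧ p.2 ≤ 1 ∧ 1 < p.1 + p.2}

/-- The region 𝒯(k) = {(x,y) ∈ 𝒯 : ⌊(1+x)/y⌋ = k}. -/
def TT (k : ℕ) : Set (ℝ × ℝ) :=
  {p | p ∈ fareyTriangle ∧ ⌊(1 + p.1) / p.2⌋ = (k : ℤ)}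

/-- The region 𝒯(k₁,…,k_r) = 𝒯(k₁) ∩ T⁻¹(𝒯(k₂)) ∩ ⋯ ∩ T^{−(r−1)}(𝒯(k_r)). -/
noncomputable def TTlist (ks : List ℕ) : Set (ℝ × ℝ) :=
  ⋂ i : Fin ks.length, (bcz^[i.1]) ⁻¹' TT (ks.get i)

/-!
On `𝒯(k)` the BCZ map is the restriction of the unimodular linear map `L_k (x, y) = (y, k y - x)`.
For large `k` the region `𝒯(k)` is a thin sliver along the side `x = 1`, so `T` sends it into
`𝒯(1)` and `T²` sends it into `𝒯(2)`: this is (a) and (b), and it reduces (d) and (e) to (c),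
and (f) to `|𝒯(1, k)| = |𝒯(k)|`. Conversely `L₁⁻¹` sends `𝒯(k)` into `𝒯(1)` and `L₂⁻¹ L₁⁻¹`
sends it into `𝒯(2)`, so `𝒯(1, k) = L₁⁻¹ 𝒯(k)` and `𝒯(2, 1, k) = L₂⁻¹ L₁⁻¹ 𝒯(k)`, and these
have the area of `𝒯(k)` because `det L_k = 1`.
-/

lemma mem_TT_iff {k : ℕ} {x y : ℝ} :
    (x, y) ∈ TT k ↔ 0 < x ∧ x ≤ 1 ∧ 0 < y ∧ y ≤ 1 ∧ 1 < x + y ∧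
      (k : ℝ) * y ≤ 1 + x ∧ 1 + x < ((k : ℝ) + 1) * y := by
  refine ⟨fun ⟨⟨h₁, h₂, hy, h₄, h₅⟩, hk⟩ => ?_, fun ⟨h₁, h₂, hy, h₄, h₅, hlo, hhi⟩ => ?_⟩
  · obtain ⟨hlo, hhi⟩ := Int.floor_eq_iff.mp hk
    push_cast at hlo hhi
    exact ⟨h₁, h₂, hy, h₄, h₅, (le_div_iff₀ hy).mp hlo, (div_lt_iff₀ hy).mp hhi⟩
  · refine ⟨⟨h₁, h₂, hy, h₄, h₅⟩, Int.floor_eq_iff.mpr ?_⟩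
    push_cast
    exact ⟨(le_div_iff₀ hy).mpr hlo, (div_lt_iff₀ hy).mpr hhi⟩

lemma TTlist_singleton (k : ℕ) : TTlist [k] = TT k := by
  ext p
  simp [TTlist]

lemma TTlist_cons (k : ℕ) (ks : List ℕ) :
    TTlist (k :: ks) = TT k ∩ bcz ⁻¹' TTlist ks := by
  ext p
  simp only [TTlist, Set.mem_iInter, Set.mem_inter_iff, Set.mem_preimage]
  constructor
  · intro h
    exact ⟨by simpa using h 0, fun i => by simpa [Function.iterate_succ_apply] using h i.succ⟩
  · rintro ⟨h₀, h⟩ i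
    refine Fin.cases ?_ (fun j => ?_) i
    · simpa using h₀
    · simpa [Function.iterate_succ_apply] using h j

noncomputable def bczLinear (k : ℕ) : (ℝ × ℝ) →ₗ[ℝ] (ℝ × ℝ) :=
  (LinearMap.snd ℝ ℝ ℝ).prod ((k : ℝ) • LinearMap.snd ℝ ℝ ℝ - LinearMap.fst ℝ ℝ ℝ)

lemma bczLinear_apply (k : ℕ) (x y : ℝ) : bczLinear k (x, y) = (y, k * y - x) := rfl

lemma det_bczLinear (k : ℕ) : LinearMap.det (bczLinear k) = 1 := by
  rw [← LinearMap.det_toMatrix (Module.Basis.finTwoProd ℝ), Matrix.det_fin_two]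
  simp [bczLinear, LinearMap.toMatrix_apply]

lemma volume_preimage_bczLinear (k : ℕ) (s : Set (ℝ × ℝ)) :
    volume (bczLinear k ⁻¹' s) = volume s := by
  simp [Measure.addHaar_preimage_linearMap, det_bczLinear]

lemma bcz_eq_bczLinear {k : ℕ} {p : ℝ × ℝ} (hp : p ∈ TT k) : bcz p = bczLinear k p := by
  simp [bcz, bczLinear, hp.2]

lemma inter_bcz_preimage_eq {k : ℕ} {A : Set (ℝ × ℝ)} (hA : A ⊆ TT k) (s : Set (ℝ × ℝ)) :
    A ∩ bcz ⁻¹' s = A ∩ bczLinear k ⁻¹' s :=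
  Set.ext fun _ => and_congr_right fun hp => by
    rw [Set.mem_preimage, Set.mem_preimage, bcz_eq_bczLinear (hA hp)]

lemma bcz_mem_TT_one {k : ℕ} (hk : 5 ≤ k) {p : ℝ × ℝ} (hp : p ∈ TT k) : bcz p ∈ TT 1 := by
  obtain ⟨x, y⟩ := p
  rw [bcz_eq_bczLinear hp, bczLinear_apply, mem_TT_iff]
  obtain ⟨h₁, h₂, hy, h₄, h₅, hlo, hhi⟩ := mem_TT_iff.mp hp
  -- here and below, the one nonlinear fact `nlinarith` needs is `(k - k₀) * y ≥ 0`
  have : 0 ≤ ((k : ℝ) - 5) * y := mul_nonneg (sub_nonneg.mpr (by exact_mod_cast hk)) hy.le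
  push_cast
  refine ⟨?_, ?_, ?_, ?_, ?_, ?_, ?_⟩ <;> nlinarith

lemma bcz_bcz_mem_TT_two {k : ℕ} (hk : 9 ≤ k) {p : ℝ × ℝ} (hp : p ∈ TT k) :
    bcz (bcz p) ∈ TT 2 := by
  obtain ⟨x, y⟩ := p
  have hp₁ := bcz_mem_TT_one (by omega) hp
  rw [bcz_eq_bczLinear hp, bczLinear_apply] at hp₁ ⊢
  rw [bcz_eq_bczLinear hp₁, bczLinear_apply, mem_TT_iff]
  obtain ⟨h₁, h₂, hy, h₄, h₅, hlo, hhi⟩ := mem_TT_iff.mp hp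
  have : 0 ≤ ((k : ℝ) - 9) * y := mul_nonneg (sub_nonneg.mpr (by exact_mod_cast hk)) hy.le
  push_cast
  refine ⟨?_, ?_, ?_, ?_, ?_, ?_, ?_⟩ <;> nlinarith

lemma mem_TT_one_of_bczLinear_mem {k : ℕ} (hk : 6 ≤ k) {x y : ℝ}
    (h : bczLinear 1 (x, y) ∈ TT k) : (x, y) ∈ TT 1 := by
  simp only [bczLinear_apply, Nat.cast_one, one_mul, mem_TT_iff] at h
  obtain ⟨h₁, h₂, hy, h₄, h₅, hlo, hhi⟩ := h
  have : 0 ≤ ((k : ℝ) - 6) * (y - x) :=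
    mul_nonneg (sub_nonneg.mpr (by exact_mod_cast hk)) hy.le
  rw [mem_TT_iff]
  push_cast
  refine ⟨?_, ?_, ?_, ?_, ?_, ?_, ?_⟩ <;> nlinarith

lemma mem_TT_two_of_bczLinear_bczLinear_mem {k : ℕ} (hk : 9 ≤ k) {x y : ℝ}
    (h : bczLinear 1 (bczLinear 2 (x, y)) ∈ TT k) : (x, y) ∈ TT 2 := by
  simp only [bczLinear_apply, Nat.cast_one, Nat.cast_ofNat, one_mul, mem_TT_iff] at h
  obtain ⟨h₁, h₂, hy, h₄, h₅, hlo, hhi⟩ := h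
  have : 0 ≤ ((k : ℝ) - 9) * (2 * y - x - y) :=
    mul_nonneg (sub_nonneg.mpr (by exact_mod_cast hk)) hy.le
  rw [mem_TT_iff]
  push_cast
  refine ⟨?_, ?_, ?_, ?_, ?_, ?_, ?_⟩ <;> nlinarith

lemma TTlist_k_one {k : ℕ} (hk : 5 ≤ k) : TTlist [k, 1] = TT k := by
  rw [TTlist_cons, TTlist_singleton]
  exact Set.inter_eq_left.mpr fun _ hp => bcz_mem_TT_one hk hp

lemma TTlist_k_one_two {k : ℕ} (hk : 9 ≤ k) : TTlist [k, 1, 2] = TT k := by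
  rw [TTlist_cons, TTlist_cons, TTlist_singleton]
  exact Set.inter_eq_left.mpr fun _ hp => ⟨bcz_mem_TT_one (by omega) hp, bcz_bcz_mem_TT_two hk hp⟩

lemma TT_one_inter_bcz_preimage {k : ℕ} (hk : 6 ≤ k) :
    TT 1 ∩ bcz ⁻¹' TT k = bczLinear 1 ⁻¹' TT k := by
  rw [inter_bcz_preimage_eq subset_rfl]
  exact Set.inter_eq_right.mpr fun _ hp => mem_TT_one_of_bczLinear_mem hk hp

lemma TT_two_inter_bcz_preimage {k : ℕ} (hk : 9 ≤ k) :
    TT 2 ∩ bcz ⁻¹' (TT 1 ∩ bcz ⁻¹' TT k) = bczLinear 2 ⁻¹' (bczLinear 1 ⁻¹' TT k) := by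
  rw [TT_one_inter_bcz_preimage (by omega), inter_bcz_preimage_eq subset_rfl]
  exact Set.inter_eq_right.mpr fun _ hp => mem_TT_two_of_bczLinear_bczLinear_mem hk hp

/-- The area identities of Lemma 7. -/
theorem volume_TTlist_identities :
    (∀ k : ℕ, 5 ≤ k → volume (TTlist [k, 1]) = volume (TTlist [k])) ∧
    (∀ k : ℕ, 9 ≤ k → volume (TTlist [k, 1, 2]) = volume (TTlist [k])) ∧
    (∀ k : ℕ, 9 ≤ k → volume (TTlist [2, 1, k]) = volume (TTlist [k])) ∧
    (∀ k : ℕ, 9 ≤ k → volume (TTlist [2, 1, k, 1]) = volume (TTlist [k])) ∧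
    (∀ k : ℕ, 9 ≤ k → volume (TTlist [2, 1, k, 1, 2]) = volume (TTlist [k])) ∧
    (∀ k : ℕ, 6 ≤ k → volume (TTlist [1, k, 1]) = volume (TTlist [k])) := by
  have volume_two_one {k : ℕ} (hk : 9 ≤ k) :
      volume (TT 2 ∩ bcz ⁻¹' (TT 1 ∩ bcz ⁻¹' TT k)) = volume (TT k) := by
    rw [TT_two_inter_bcz_preimage hk, volume_preimage_bczLinear, volume_preimage_bczLinear]
  refine ⟨fun k hk => ?_, fun k hk => ?_, fun k hk => ?_, fun k hk => ?_,
    fun k hk => ?_, fun k hk => ?_⟩ <;> rw [TTlist_singleton]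
  · rw [TTlist_k_one hk]
  · rw [TTlist_k_one_two hk]
  · rw [TTlist_cons, TTlist_cons, TTlist_singleton, volume_two_one hk]
  · rw [TTlist_cons, TTlist_cons, TTlist_k_one (by omega), volume_two_one hk]
  · rw [TTlist_cons, TTlist_cons, TTlist_k_one_two hk, volume_two_one hk]
  · rw [TTlist_cons, TTlist_k_one (by omega), TT_one_inter_bcz_preimage hk,
      volume_preimage_bczLinear]
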